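/- arXiv:2411.04204 — 6 statements merged into one kernel-verified Lean document; each statement's English description precedes it below -/
import Mathlib

section
/- Let φ : [0,1] → ℝ be increasing with φ'' ≤ 0 on [0,1], and let x_1,...,x_N be positive reals with x_i ≤ κ for all i and y = Σ x_i ≤ 1. Then Σ_{i=1}^N x_i φ(Σ_{j<i} x_j) ≥ ∫_0^y φ(x) dx − κ·(φ(y) − φ(0)). -/
open MeasureTheory

/-- If `φ` is increasing on `[0,1]` and twice differentiable with `φ'' ≤ 0`, and
`x 0, ..., x (N-1)` are positive reals each at most `κ` with sum `y ≤ 1`, then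
`∑ i, x i * φ (∑_{j < i} x j) ≥ ∫_0^y φ − κ (φ y − φ 0)`. -/
theorem weighted_sum_ge_of_concave
    (φ φ' φ'' : ℝ → ℝ)
    (hderiv : ∀ t ∈ Set.Icc (0:ℝ) 1, HasDerivAt φ (φ' t) t)
    (hderiv2 : ∀ t ∈ Set.Icc (0:ℝ) 1, HasDerivAt φ' (φ'' t) t)
    (hmono : MonotoneOn φ (Set.Icc 0 1))
    (hconc : ∀ t ∈ Set.Icc (0:ℝ) 1, φ'' t ≤ 0)
    (κ : ℝ) (hκ0 : 0 ≤ κ) (hκ1 : κ ≤ 1)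
    (N : ℕ) (x : ℕ → ℝ) (hpos : ∀ i < N, 0 < x i) (hbd : ∀ i < N, x i ≤ κ)
    (y : ℝ) (hy : y = ∑ i ∈ Finset.range N, x i) (hy1 : y ≤ 1) :
    (∫ t in (0:ℝ)..y, φ t) - κ * (φ y - φ 0) ≤
      ∑ i ∈ Finset.range N, x i * φ (∑ j ∈ Finset.range i, x j) := by
  set S : ℕ → ℝ := fun n => ∑ j ∈ Finset.range n, x j with hS
  have hcont : ContinuousOn φ (Set.Icc 0 1) :=
    fun t ht => (hderiv t ht).continuousAt.continuousWithinAt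
  have hSmono : ∀ m n, m ≤ n → n ≤ N → S m ≤ S n := by
    intro m n hmn hnN
    apply Finset.sum_le_sum_of_subset_of_nonneg
    · exact Finset.range_subset_range.mpr hmn
    · intro i hi _
      exact (hpos i (lt_of_lt_of_le (Finset.mem_range.mp hi) hnN)).le
  have hS0 : S 0 = 0 := by simp [hS]
  have hSnn : ∀ n, n ≤ N → 0 ≤ S n := by
    intro n hn
    rw [← hS0]; exact hSmono 0 n (Nat.zero_le _) hn
  have hSN : S N = y := hy.symm
  have hSle1 : ∀ n, n ≤ N → S n ≤ 1 := by
    intro n hn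
    calc S n ≤ S N := hSmono n N hn le_rfl
    _ = y := hSN
    _ ≤ 1 := hy1
  have hmem : ∀ n, n ≤ N → S n ∈ Set.Icc (0:ℝ) 1 := fun n hn => ⟨hSnn n hn, hSle1 n hn⟩
  have hint : ∀ a b : ℝ, a ∈ Set.Icc (0:ℝ) 1 → b ∈ Set.Icc (0:ℝ) 1 →
      IntervalIntegrable φ volume a b := by
    intro a b ha hb
    exact (hcont.mono (Set.uIcc_subset_Icc ha hb)).intervalIntegrable
  have key : ∀ n, n ≤ N →
      (∫ t in (0:ℝ)..S n, φ t) ≤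
        (∑ i ∈ Finset.range n, x i * φ (S i)) + κ * (φ (S n) - φ 0) := by
    intro n
    induction n with
    | zero => intro _; simp [hS0]
    | succ n ih =>
      intro hn1
      have hnN : n ≤ N := Nat.le_of_succ_le hn1
      have hxpos := hpos n (Nat.lt_of_succ_le hn1)
      have hstep : S n ≤ S (n + 1) := hSmono n (n+1) (Nat.le_succ n) hn1
      have hmemn := hmem n hnN
      have hmemn1 := hmem (n+1) hn1
      have h0 : (0:ℝ) ∈ Set.Icc (0:ℝ) 1 := by constructor <;> norm_num
      have hsplit : (∫ t in (0:ℝ)..S (n+1), φ t) =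
          (∫ t in (0:ℝ)..S n, φ t) + ∫ t in (S n)..(S (n+1)), φ t :=
        (intervalIntegral.integral_add_adjacent_intervals
          (hint 0 (S n) h0 hmemn) (hint (S n) (S (n+1)) hmemn hmemn1)).symm
      have hbound : (∫ t in (S n)..(S (n+1)), φ t) ≤ x n * φ (S (n+1)) := by
        have : (∫ t in (S n)..(S (n+1)), φ t) ≤ ∫ _t in (S n)..(S (n+1)), φ (S (n+1)) := by
          apply intervalIntegral.integral_mono_on hstep (hint (S n) (S (n+1)) hmemn hmemn1)
            intervalIntegrable_const
          intro t ht
          exact hmono ⟨le_trans (hSnn n hnN) ht.1, le_trans ht.2 (hSle1 (n+1) hn1)⟩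
            hmemn1 ht.2
        rw [intervalIntegral.integral_const] at this
        have hdiff : S (n+1) - S n = x n := by
          simp [hS, Finset.sum_range_succ]
        rw [hdiff] at this
        simpa using this
      have htele : x n * φ (S (n+1)) ≤ x n * φ (S n) + κ * (φ (S (n+1)) - φ (S n)) := by
        have hφle : φ (S n) ≤ φ (S (n+1)) := hmono hmemn hmemn1 hstep
        have := mul_le_mul_of_nonneg_right (hbd n (Nat.lt_of_succ_le hn1))
          (sub_nonneg.mpr hφle)
        nlinarith
      calc (∫ t in (0:ℝ)..S (n+1), φ t)
          = (∫ t in (0:ℝ)..S n, φ t) + ∫ t in (S n)..(S (n+1)), φ t := hsplit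
        _ ≤ ((∑ i ∈ Finset.range n, x i * φ (S i)) + κ * (φ (S n) - φ 0))
              + (x n * φ (S n) + κ * (φ (S (n+1)) - φ (S n))) := by
            have := ih hnN
            linarith [le_trans hbound htele]
        _ = (∑ i ∈ Finset.range (n+1), x i * φ (S i)) + κ * (φ (S (n+1)) - φ 0) := by
            rw [Finset.sum_range_succ]; ring
  have := key N le_rfl
  rw [hSN] at this
  linarith
end

section
/- Let φ : [0,1] → ℝ be increasing with 0 < φ''(x) ≤ R on [0,1], and let x_1,...,x_N be positive reals with x_i ≤ κ and y = Σ x_i ≤ 1. Then Σ_{i=1}^N x_i φ(Σ_{j<i} x_j) ≥ ∫_0^y φ(x) dx − κ(φ(y) − φ(0)) − κ² R y. -/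
open MeasureTheory

/-- If `φ` is increasing on `[0,1]` and twice differentiable with `0 < φ'' ≤ R`,
and `x 0, ..., x (N-1)` are positive reals each at most `κ` with sum `y ≤ 1`, then
`∑ i, x i * φ (∑_{j < i} x j) ≥ ∫_0^y φ − κ (φ y − φ 0) − κ² R y`. -/
theorem weighted_sum_ge_of_bounded_second_deriv
    (φ φ' φ'' : ℝ → ℝ) (R : ℝ)
    (hderiv : ∀ t ∈ Set.Icc (0:ℝ) 1, HasDerivAt φ (φ' t) t)
    (hderiv2 : ∀ t ∈ Set.Icc (0:ℝ) 1, HasDerivAt φ' (φ'' t) t)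
    (hmono : MonotoneOn φ (Set.Icc 0 1))
    (hpos2 : ∀ t ∈ Set.Icc (0:ℝ) 1, 0 < φ'' t)
    (hbd2 : ∀ t ∈ Set.Icc (0:ℝ) 1, φ'' t ≤ R)
    (κ : ℝ) (hκ0 : 0 ≤ κ) (hκ1 : κ ≤ 1)
    (N : ℕ) (x : ℕ → ℝ) (hpos : ∀ i < N, 0 < x i) (hbd : ∀ i < N, x i ≤ κ)
    (y : ℝ) (hy : y = ∑ i ∈ Finset.range N, x i) (hy1 : y ≤ 1) :
    (∫ t in (0:ℝ)..y, φ t) - κ * (φ y - φ 0) - κ ^ 2 * R * y ≤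
      ∑ i ∈ Finset.range N, x i * φ (∑ j ∈ Finset.range i, x j) := by
  set s : ℕ → ℝ := fun i => ∑ j ∈ Finset.range i, x j with hs
  have hxnn : ∀ i < N, 0 ≤ x i := fun i hi => (hpos i hi).le
  -- s is monotone up to N, with s 0 = 0 and s N = y
  have hs0 : s 0 = 0 := Finset.sum_range_zero x
  have hsN : s N = y := hy.symm
  have hsle : ∀ ⦃i j : ℕ⦄, i ≤ j → j ≤ N → s i ≤ s j := by
    intro i j hij hjN
    have : s j - s i = ∑ k ∈ Finset.Ico i j, x k := by
      rw [hs]; rw [Finset.sum_Ico_eq_sub _ hij]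
    have hnn : 0 ≤ ∑ k ∈ Finset.Ico i j, x k :=
      Finset.sum_nonneg fun k hk => hxnn k (lt_of_lt_of_le (Finset.mem_Ico.mp hk).2 hjN)
    linarith
  have hsnn : ∀ i ≤ N, 0 ≤ s i := fun i hi => hs0 ▸ hsle (Nat.zero_le i) hi
  have hsley : ∀ i ≤ N, s i ≤ y := fun i hi => hsN ▸ hsle hi le_rfl
  have hymem : ∀ i ≤ N, s i ∈ Set.Icc (0:ℝ) 1 :=
    fun i hi => ⟨hsnn i hi, le_trans (hsley i hi) hy1⟩
  have h0y : (0:ℝ) ≤ y := hsN ▸ hsnn N le_rfl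
  -- R > 0
  have h0mem : (0:ℝ) ∈ Set.Icc (0:ℝ) 1 := ⟨le_rfl, zero_le_one⟩
  have hR : 0 < R := lt_of_lt_of_le (hpos2 0 h0mem) (hbd2 0 h0mem)
  -- φ continuous on [0,1]
  have hcont : ContinuousOn φ (Set.Icc 0 1) := fun t ht =>
    (hderiv t ht).continuousAt.continuousWithinAt
  -- step difference
  have hstep : ∀ i, s (i + 1) - s i = x i := by
    intro i; rw [hs]; simp [Finset.sum_range_succ]
  -- integrability on each subinterval
  have hint : ∀ k < N, IntervalIntegrable φ volume (s k) (s (k + 1)) := by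
    intro k hk
    apply ContinuousOn.intervalIntegrable
    apply hcont.mono
    rw [Set.uIcc_of_le (hsle (Nat.le_succ k) hk)]
    exact Set.Icc_subset_Icc (hsnn k hk.le) (le_trans (hsley (k+1) hk) hy1)
  -- main integral bound
  have key : (∫ t in (0:ℝ)..y, φ t) ≤ ∑ i ∈ Finset.range N, x i * φ (s (i + 1)) := by
    have hsum := intervalIntegral.sum_integral_adjacent_intervals (μ := volume) (f := φ) hint
    rw [hs0, hsN] at hsum
    rw [← hsum]
    apply Finset.sum_le_sum
    intro i hi
    have hiN := Finset.mem_range.mp hi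
    have hab : s i ≤ s (i + 1) := hsle (Nat.le_succ i) hiN
    have hsub : Set.Icc (s i) (s (i + 1)) ⊆ Set.Icc (0:ℝ) 1 :=
      Set.Icc_subset_Icc (hsnn i hiN.le) (le_trans (hsley (i+1) hiN) hy1)
    have hmemi1 : s (i + 1) ∈ Set.Icc (0:ℝ) 1 := hymem (i + 1) hiN
    calc (∫ t in s i..s (i + 1), φ t)
        ≤ ∫ _ in s i..s (i + 1), φ (s (i + 1)) := by
          apply intervalIntegral.integral_mono_on hab (hint i hiN)
            intervalIntegrable_const
          intro t ht
          exact hmono (hsub ht) hmemi1 ht.2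
      _ = x i * φ (s (i + 1)) := by
          rw [intervalIntegral.integral_const, hstep i, smul_eq_mul]
  -- telescoping bound
  have tele : ∑ i ∈ Finset.range N, x i * φ (s (i + 1)) -
      ∑ i ∈ Finset.range N, x i * φ (s i) ≤ κ * (φ y - φ 0) := by
    rw [← Finset.sum_sub_distrib]
    have : ∀ i ∈ Finset.range N, x i * φ (s (i + 1)) - x i * φ (s i)
        ≤ κ * (φ (s (i + 1)) - φ (s i)) := by
      intro i hi
      have hiN := Finset.mem_range.mp hi
      have hdiff : 0 ≤ φ (s (i + 1)) - φ (s i) := by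
        have := hmono (hymem i hiN.le) (hymem (i + 1) hiN) (hsle (Nat.le_succ i) hiN)
        linarith
      nlinarith [hbd i hiN, hxnn i hiN]
    calc ∑ i ∈ Finset.range N, (x i * φ (s (i + 1)) - x i * φ (s i))
        ≤ ∑ i ∈ Finset.range N, κ * (φ (s (i + 1)) - φ (s i)) :=
          Finset.sum_le_sum this
      _ = κ * ∑ i ∈ Finset.range N, (φ (s (i + 1)) - φ (s i)) := by
          rw [Finset.mul_sum]
      _ = κ * (φ (s N) - φ (s 0)) := by
          rw [Finset.sum_range_sub (fun i => φ (s i))]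
      _ = κ * (φ y - φ 0) := by rw [hs0, hsN]
  have hslack : 0 ≤ κ ^ 2 * R * y := by positivity
  have : ∑ i ∈ Finset.range N, x i * φ (s i) = ∑ i ∈ Finset.range N, x i * φ (∑ j ∈ Finset.range i, x j) := rfl
  linarith [key, tele]
end

section
/- For the online budgeted matching problem without fractional last matching, with maximum bid-to-budget ratio κ ∈ (0,1], no deterministic online algorithm achieves a competitive ratio greater than 1 − κ. Concretely: for every deterministic algorithm and every ε > 0, there exists an instance with one offline node of budget 1 where the bids in the first V−1 rounds are equal and sum to 1 − κ + ε, and the last bid is either κ or 0, on which the algorithm's reward is at most (1 − κ + ε') times the offline optimum, with ε' → 0 as ε → 0 and the common bid → 0. -/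
open Classical

/-- Total reward of a deterministic online algorithm on a single offline node.
`alg hist w` decides, given the history of previously revealed bids and the
current bid `w`, whether to match the current query.  A match is only executed
(earning reward `w` and consuming budget `w`) if the remaining budget suffices. -/
noncomputable def obmRun (alg : List ℝ → ℝ → Bool) : List ℝ → List ℝ → ℝ → ℝ
  | [], _, _ => 0
  | w :: ws, hist, b =>
    if alg hist w = true ∧ w ≤ b then
      w + obmRun alg ws (hist ++ [w]) (b - w)
    else
      obmRun alg ws (hist ++ [w]) b

/-- Offline optimal reward for a single offline node with budget `1`:
the largest total of any subset of the bids whose sum does not exceed `1`. -/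
noncomputable def obmOpt (w : List ℝ) : ℝ :=
  sSup {r : ℝ | ∃ S : Finset ℕ, S ⊆ Finset.range w.length ∧
    (∑ i ∈ S, w.getD i 0) ≤ 1 ∧ r = ∑ i ∈ S, w.getD i 0}

/-!
Feed the algorithm a long stream of equal tiny bids `ω`. If its accepted total ever exceeds
`1 - κ`, stop at the first such moment, when it is at most `1 - κ + ω`, and send a final bid `κ`:
the remaining budget is below `κ`, so the algorithm must reject it, while the offline optimum
packs `κ` with enough tiny bids to come within `ω` of `1`. Otherwise its total stays at most
`1 - κ` for ever; send enough tiny bids to fill the budget and a final bid `0`. In both cases the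
ratio is at most `(1 - κ + ω) / (1 - ω)`, which tends to `1 - κ` with `ω`.
-/

theorem exists_lt_le_add_of_map_succ_le {α : Type*} [LinearOrder α] [Add α] [AddRightMono α]
    {f : ℕ → α} {a d : α} (h0 : f 0 ≤ a) (hstep : ∀ k, f (k + 1) ≤ f k + d)
    (hcross : ∃ t, a < f t) : ∃ T, a < f T ∧ f T ≤ a + d := by
  refine ⟨Nat.find hcross, Nat.find_spec hcross, ?_⟩
  obtain ⟨k, hk⟩ : ∃ k, Nat.find hcross = k + 1 :=
    Nat.exists_eq_succ_of_ne_zero fun h ↦ (h ▸ Nat.find_spec hcross).not_ge h0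
  have hfk : f k ≤ a := not_lt.mp (Nat.find_min hcross (by omega))
  exact hk ▸ (hstep k).trans (add_le_add_left hfk d)

section obmRun

variable (alg : List ℝ → ℝ → Bool)

/-- The reward collected so far is exactly the budget consumed so far. -/
theorem obmRun_append (xs ys hist : List ℝ) (b : ℝ) :
    obmRun alg (xs ++ ys) hist b =
      obmRun alg xs hist b + obmRun alg ys (hist ++ xs) (b - obmRun alg xs hist b) := by
  induction xs generalizing hist b with
  | nil => simp [obmRun]
  | cons x xs ih =>
    simp only [List.cons_append, obmRun, ih, List.append_assoc, List.nil_append]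
    split_ifs
    · rw [sub_sub, add_assoc]
    · rfl

theorem obmRun_singleton (c : ℝ) (hist : List ℝ) (b : ℝ) :
    obmRun alg [c] hist b = if alg hist c = true ∧ c ≤ b then c else 0 := by
  simp [obmRun]

theorem obmRun_le_sum {xs : List ℝ} (hxs : ∀ x ∈ xs, 0 ≤ x) (hist : List ℝ) (b : ℝ) :
    obmRun alg xs hist b ≤ xs.sum := by
  induction xs generalizing hist b with
  | nil => simp [obmRun]
  | cons x xs ih =>
    have ih' := ih (fun y hy ↦ hxs y (List.mem_cons_of_mem x hy))
    have hx := hxs x List.mem_cons_self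
    simp only [obmRun, List.sum_cons]
    split_ifs
    · linarith [ih' (hist ++ [x]) (b - x)]
    · linarith [ih' (hist ++ [x]) b]

theorem obmRun_replicate_succ_le {ω : ℝ} (hω : 0 ≤ ω) (k : ℕ) :
    obmRun alg (List.replicate (k + 1) ω) [] 1 ≤ obmRun alg (List.replicate k ω) [] 1 + ω := by
  rw [List.replicate_succ', obmRun_append, obmRun_singleton]
  split_ifs <;> linarith

theorem exists_replicate_append_obmRun_le {κ ω : ℝ} (hκ0 : 0 < κ) (hκ1 : κ ≤ 1) (hω : 0 < ω) :
    ∃ (n : ℕ) (last : ℝ), (last = κ ∨ last = 0) ∧ 1 - κ < n * ω ∧ 1 - last ≤ n * ω ∧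
      obmRun alg (List.replicate n ω ++ [last]) [] 1 ≤ 1 - κ + ω := by
  set r : ℕ → ℝ := fun k ↦ obmRun alg (List.replicate k ω) [] 1
  have hr_le (k : ℕ) : r k ≤ k * ω := by
    simpa using obmRun_le_sum alg (xs := List.replicate k ω)
      (fun x hx ↦ (List.eq_of_mem_replicate hx).symm ▸ hω.le) [] 1
  by_cases hcross : ∃ t, 1 - κ < r t
  · have hr0 : r 0 ≤ 1 - κ := by simp only [r, List.replicate_zero, obmRun]; linarith
    obtain ⟨T, hT, hT'⟩ :=
      exists_lt_le_add_of_map_succ_le hr0 (obmRun_replicate_succ_le alg hω.le) hcross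
    refine ⟨T, κ, Or.inl rfl, hT.trans_le (hr_le T), by linarith [hr_le T], ?_⟩
    rw [obmRun_append, obmRun_singleton, if_neg fun h ↦ by linarith [h.2]]
    linarith
  · simp only [not_exists, not_lt] at hcross
    set n := ⌈1 / ω⌉₊
    have hn : 1 ≤ n * ω := (div_le_iff₀ hω).mp (Nat.le_ceil _)
    refine ⟨n, 0, Or.inr rfl, by linarith, by linarith, ?_⟩
    rw [obmRun_append, obmRun_singleton, ite_self, add_zero]
    linarith [hcross n]

end obmRun

theorem le_obmOpt {w : List ℝ} {S : Finset ℕ} (hS : S ⊆ Finset.range w.length)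
    (hS1 : ∑ i ∈ S, w.getD i 0 ≤ 1) : ∑ i ∈ S, w.getD i 0 ≤ obmOpt w :=
  le_csSup ⟨1, fun _ ⟨_, _, hT1, hr⟩ ↦ hr ▸ hT1⟩ ⟨S, hS, hS1, rfl⟩

theorem sum_getD_replicate_append_singleton {n j : ℕ} (hj : j ≤ n) (ω c : ℝ) :
    ∑ i ∈ insert n (Finset.range j), (List.replicate n ω ++ [c]).getD i 0 = c + j * ω := by
  have hlast : (List.replicate n ω ++ [c]).getD n 0 = c := by
    rw [List.getD_append_right _ _ _ _ (by simp)]; simp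
  have hfirst : ∀ i ∈ Finset.range j, (List.replicate n ω ++ [c]).getD i 0 = ω := by
    intro i hi
    have hin : i < n := (Finset.mem_range.mp hi).trans_le hj
    rw [List.getD_append _ _ _ _ (by simpa using hin), List.getD_replicate _ hin]
  rw [Finset.sum_insert (by simpa using hj), hlast, Finset.sum_congr rfl hfirst]
  simp

/-- `c` together with as many bids `ω` as fit next to it. -/
theorem one_sub_le_obmOpt_replicate_append {n : ℕ} {ω c : ℝ} (hω : 0 < ω) (hc1 : c ≤ 1)
    (hn : 1 - c ≤ n * ω) : 1 - ω ≤ obmOpt (List.replicate n ω ++ [c]) := by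
  set j := ⌊(1 - c) / ω⌋₊
  have hj : j * ω ≤ 1 - c := (le_div_iff₀ hω).mp (Nat.floor_le (by positivity))
  have hj' : 1 - c < (j + 1) * ω := (div_lt_iff₀ hω).mp (Nat.lt_floor_add_one _)
  have hjn : j ≤ n := by exact_mod_cast le_of_mul_le_mul_right (hj.trans hn) hω
  have hsum := sum_getD_replicate_append_singleton hjn ω c
  have hopt := le_obmOpt (w := List.replicate n ω ++ [c]) (S := insert n (Finset.range j))
    (Finset.insert_subset (by simp) (by simpa using hjn.trans n.le_succ)) (by rw [hsum]; linarith)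
  linarith

theorem exists_pos_add_le_mul_one_sub {κ δ : ℝ} (hκ : 0 < κ) (hδ : 0 < δ) :
    ∃ ω : ℝ, 0 < ω ∧ ω ≤ κ ∧ ω < 1 ∧ 1 - κ + ω ≤ (1 - κ + δ) * (1 - ω) := by
  obtain ⟨hmκ, hmδ, hm1⟩ : min κ (min δ 1) ≤ κ ∧ min κ (min δ 1) ≤ δ ∧ min κ (min δ 1) ≤ 1 := by
    simp
  have hm : 0 < min κ (min δ 1) := by positivity
  refine ⟨min κ (min δ 1) / 4, by positivity, by linarith, by linarith, ?_⟩
  nlinarith [mul_pos hκ hm, mul_le_mul_of_nonneg_left hm1 hδ.le]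

/-- Upper bound `1 - κ` on the competitive ratio of any deterministic online
algorithm for OBM without FLM, for bid-budget ratio `κ ∈ (0,1]`: for every
deterministic algorithm and every `δ > 0` there is an instance with one offline
node of budget `1`, all bids in `[0, κ]`, consisting of `V - 1` equal bids `ω`
summing to `1 - κ + ε` (for some small `ε > 0`) followed by one final bid equal
to `κ` or `0`, on which the algorithm earns at most `(1 - κ + δ)` times the
offline optimum (which is positive). -/
theorem obm_no_flm_competitive_ratio_upper_bound
    (κ : ℝ) (hκ0 : 0 < κ) (hκ1 : κ ≤ 1)
    (alg : List ℝ → ℝ → Bool) (δ : ℝ) (hδ : 0 < δ) :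
    ∃ (V : ℕ) (ω ε last : ℝ) (w : List ℝ),
      1 ≤ V ∧ 0 < ε ∧ 0 < ω ∧
      w = List.replicate (V - 1) ω ++ [last] ∧
      (last = κ ∨ last = 0) ∧
      ((V : ℝ) - 1) * ω = 1 - κ + ε ∧
      (∀ b ∈ w, 0 ≤ b ∧ b ≤ κ) ∧
      0 < obmOpt w ∧
      obmRun alg w [] 1 ≤ (1 - κ + δ) * obmOpt w := by
  obtain ⟨ω, hω0, hωκ, hω1, hratio⟩ := exists_pos_add_le_mul_one_sub hκ0 hδ
  obtain ⟨n, last, hlast, hcross, hfill, hrun⟩ :=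
    exists_replicate_append_obmRun_le alg hκ0 hκ1 hω0
  have hlast_mem : 0 ≤ last ∧ last ≤ κ := by rcases hlast with rfl | rfl <;> constructor <;> linarith
  have hopt := one_sub_le_obmOpt_replicate_append hω0 (hlast_mem.2.trans hκ1) hfill
  refine ⟨n + 1, ω, n * ω - (1 - κ), last, List.replicate n ω ++ [last], by omega, by linarith,
    hω0, by simp, hlast, by push_cast; ring, ?_, by linarith, ?_⟩
  · intro b hb
    rcases List.mem_append.mp hb with hb | hb
    · rw [List.eq_of_mem_replicate hb]; exact ⟨hω0.le, hωκ⟩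
    · rw [List.mem_singleton.mp hb]; exact hlast_mem
  · calc obmRun alg (List.replicate n ω ++ [last]) [] 1 ≤ 1 - κ + ω := hrun
      _ ≤ (1 - κ + δ) * (1 - ω) := hratio
      _ ≤ (1 - κ + δ) * obmOpt (List.replicate n ω ++ [last]) :=
        mul_le_mul_of_nonneg_left hopt (by linarith)
end

section
/- For κ = 1, no deterministic online algorithm for online budgeted matching without fractional last matching achieves a positive competitive ratio: for any deterministic algorithm and any δ > 0, there is an instance on which the ratio of the algorithm's reward to the offline optimum is less than δ. -/
open Classical

lemma obmOpt_bddAbove (w : List ℝ) :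
    BddAbove {r : ℝ | ∃ S : Finset ℕ, S ⊆ Finset.range w.length ∧
      (∑ i ∈ S, w.getD i 0) ≤ 1 ∧ r = ∑ i ∈ S, w.getD i 0} := by
  refine ⟨1, ?_⟩
  rintro r ⟨S, _, hle, rfl⟩
  exact hle

lemma obmOpt_ge (w : List ℝ) (S : Finset ℕ) (hS : S ⊆ Finset.range w.length)
    (hle : (∑ i ∈ S, w.getD i 0) ≤ 1) : (∑ i ∈ S, w.getD i 0) ≤ obmOpt w :=
  le_csSup (obmOpt_bddAbove w) ⟨S, hS, hle, rfl⟩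

/-- For bid-budget ratio `κ = 1`, no deterministic online algorithm for OBM
without FLM achieves a positive competitive ratio: for any deterministic
algorithm and any `δ > 0`, there is an instance (one offline node with budget
`1`, bids in `[0,1]`) with positive offline optimum on which the algorithm's
reward is less than `δ` times the offline optimum. -/
theorem obm_no_flm_zero_competitive_ratio_kappa_one
    (alg : List ℝ → ℝ → Bool) (δ : ℝ) (hδ : 0 < δ) :
    ∃ w : List ℝ,
      (∀ b ∈ w, 0 ≤ b ∧ b ≤ 1) ∧
      0 < obmOpt w ∧
      obmRun alg w [] 1 < δ * obmOpt w := by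
  set ω : ℝ := min δ 1 / 2 with hω
  have hω0 : 0 < ω := by positivity
  have hω1 : ω ≤ 1 := by
    have : min δ 1 ≤ 1 := min_le_right _ _
    linarith
  have hωδ : ω < δ := by
    have : min δ 1 ≤ δ := min_le_left _ _
    have h1 : 0 < min δ 1 := lt_min hδ one_pos
    linarith
  by_cases h : alg [] ω = true
  · -- algorithm matches ω; present big bid 1 afterwards
    refine ⟨[ω, 1], ?_, ?_, ?_⟩
    · intro b hb
      simp only [List.mem_cons, List.mem_singleton] at hb
      rcases hb with rfl | hb
      · exact ⟨le_of_lt hω0, hω1⟩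
      · simp at hb; subst hb; norm_num
    · have h1 : (1:ℝ) ≤ obmOpt [ω, 1] := by
        have := obmOpt_ge [ω, 1] {1} (by simp) (by simp)
        simpa using this
      linarith
    · have hrun : obmRun alg [ω, 1] [] 1 = ω := by
        rw [obmRun, if_pos ⟨h, hω1⟩, obmRun]
        rw [if_neg, obmRun]
        · ring
        · rintro ⟨-, hle⟩
          linarith
      have h1 : (1:ℝ) ≤ obmOpt [ω, 1] := by
        have := obmOpt_ge [ω, 1] {1} (by simp) (by simp)
        simpa using this
      rw [hrun]
      calc ω < δ := hωδ
        _ = δ * 1 := (mul_one δ).symm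
        _ ≤ δ * obmOpt [ω, 1] := by nlinarith
  · -- algorithm skips ω; instance is just [ω]
    refine ⟨[ω], ?_, ?_, ?_⟩
    · intro b hb
      simp at hb; subst hb; exact ⟨le_of_lt hω0, hω1⟩
    · have := obmOpt_ge [ω] {0} (by simp) (by simpa using hω1)
      simp at this
      linarith
    · have hopt : ω ≤ obmOpt [ω] := by
        have := obmOpt_ge [ω] {0} (by simp) (by simpa using hω1)
        simpa using this
      have hrun : obmRun alg [ω] [] 1 = 0 := by
        rw [obmRun, if_neg, obmRun]
        rintro ⟨ht, -⟩
        exact h ht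
      rw [hrun]
      have : 0 < δ * ω := by positivity
      nlinarith
end

section
/- Let θ > 0, ρ_θ = 1 − e^{−θ}, λ ∈ (0,1], λ₁ ∈ [λ,1], B > 0, 0 ≤ b ≤ B, and 0 < w ≤ B. Define z† = λ₁ ρ_θ e^{θ(1−b/B)}/(e^θ − 1) and α = (e^{θ(1−b/B)} − 1)/(e^θ − 1). Then (1/(λρ_θ))·w·(1 − z†) ≥ w·(1 − α). -/
/-!
With `E = e^θ`, `F = e^{θ(1−b/B)}` and `ρ_θ = (E − 1)/E`, the two sides are
`w (E − F)/(E − 1)` and `w (E − λ₁ F)/(λ (E − 1))`, so the claim reduces to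
`λ (E − F) ≤ E − λ₁ F`. The difference of the two sides is `(1 − λ)(E − F) + (1 − λ₁) F`,
which is nonnegative because `0 ≤ F ≤ E`.
-/

open Real

theorem mul_sub_le_sub_mul_of_le_one {E F lam lam₁ : ℝ} (hF : 0 ≤ F) (hFE : F ≤ E)
    (hlam : lam ≤ 1) (hlam₁ : lam₁ ≤ 1) : lam * (E - F) ≤ E - lam₁ * F := by
  nlinarith [mul_nonneg (sub_nonneg.2 hlam) (sub_nonneg.2 hFE), mul_nonneg (sub_nonneg.2 hlam₁) hF]

theorem sub_div_le_sub_div_mul_of_le_one {E F lam lam₁ : ℝ} (hE : 1 < E) (hF : 0 ≤ F)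
    (hFE : F ≤ E) (hlam0 : 0 < lam) (hlam : lam ≤ 1) (hlam₁ : lam₁ ≤ 1) :
    (E - F) / (E - 1) ≤ (E - lam₁ * F) / (lam * (E - 1)) := by
  rw [← mul_div_mul_left (E - F) (E - 1) hlam0.ne']
  gcongr
  exact mul_sub_le_sub_mul_of_le_one hF hFE hlam hlam₁

theorem one_sub_exp_neg (x : ℝ) : 1 - exp (-x) = (exp x - 1) / exp x := by
  rw [exp_neg]
  field_simp

theorem lobm_first_constraint_feasible_general
    (θ lam lam₁ B b w : ℝ)
    (hθ : 0 < θ) (hlam0 : 0 < lam) (hlam1 : lam ≤ 1)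
    (hlam₁u : lam₁ ≤ 1)
    (hB : 0 < B) (hb0 : 0 ≤ b) (hw0 : 0 < w) :
    let ρ : ℝ := 1 - Real.exp (-θ)
    let z : ℝ := lam₁ * ρ * Real.exp (θ * (1 - b / B)) / (Real.exp θ - 1)
    let α : ℝ := (Real.exp (θ * (1 - b / B)) - 1) / (Real.exp θ - 1)
    w * (1 - α) ≤ (1 / (lam * ρ)) * w * (1 - z) := by
  intro ρ z α
  have hE : 1 < exp θ := one_lt_exp_iff.2 hθ
  have hE0 : exp θ - 1 ≠ 0 := (sub_pos.2 hE).ne'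
  have hFE : exp (θ * (1 - b / B)) ≤ exp θ :=
    exp_le_exp.2 (mul_le_of_le_one_right hθ.le (sub_le_self _ (div_nonneg hb0 hB.le)))
  calc w * (1 - α) = w * ((exp θ - exp (θ * (1 - b / B))) / (exp θ - 1)) := by
        simp only [α]
        field_simp
        ring
    _ ≤ w * ((exp θ - lam₁ * exp (θ * (1 - b / B))) / (lam * (exp θ - 1))) :=
        mul_le_mul_of_nonneg_left
          (sub_div_le_sub_div_mul_of_le_one hE (exp_pos _).le hFE hlam0 hlam1 hlam₁u) hw0.le
    _ = (1 / (lam * ρ)) * w * (1 - z) := by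
        simp only [z, ρ, one_sub_exp_neg]
        field_simp

/-- Non-emptiness of the LOBM competitive solution space, first constraint: for
`θ > 0`, `ρ_θ = 1 − e^{−θ}`, `λ ∈ (0,1]`, `λ₁ ∈ [λ,1]`, `B > 0`, `0 ≤ b ≤ B`,
`0 < w ≤ B`, the candidate `z† = λ₁ ρ_θ e^{θ(1−b/B)}/(e^θ − 1)` satisfies
`(1/(λρ_θ)) w (1 − z†) ≥ w (1 − α)` where
`α = (e^{θ(1−b/B)} − 1)/(e^θ − 1)`. -/
theorem lobm_first_constraint_feasible
    (θ lam lam₁ B b w : ℝ)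
    (hθ : 0 < θ) (hlam0 : 0 < lam) (hlam1 : lam ≤ 1)
    (hlam₁l : lam ≤ lam₁) (hlam₁u : lam₁ ≤ 1)
    (hB : 0 < B) (hb0 : 0 ≤ b) (hbB : b ≤ B) (hw0 : 0 < w) (hwB : w ≤ B) :
    let ρ : ℝ := 1 - Real.exp (-θ)
    let z : ℝ := lam₁ * ρ * Real.exp (θ * (1 - b / B)) / (Real.exp θ - 1)
    let α : ℝ := (Real.exp (θ * (1 - b / B)) - 1) / (Real.exp θ - 1)
    w * (1 - α) ≤ (1 / (lam * ρ)) * w * (1 - z) :=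
  lobm_first_constraint_feasible_general θ lam lam₁ B b w hθ hlam0 hlam1 hlam₁u hB hb0 hw0
end

section
/- Let θ > 0, ρ_θ = 1 − e^{−θ}, λ ∈ (0,1], λ₁ ∈ [λ,1], B > 0, 0 < w ≤ B, 0 ≤ b ≤ B with w ≤ b. Suppose α ≥ (e^{θ(1−b/B)} − 1)/(e^θ − 1). Define z† = λ₁ρ_θ e^{θ(1−b/B)}/(e^θ−1) and δ = (e^{θ(1−b/B)}/(e^θ−1))·(e^{θw/B} − 1 − w/B). Then α + (w/(λρ_θ B))·z† + δ ≥ (e^{θ(1−(b−w)/B)} − 1)/(e^θ − 1). -/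
/-- Non-emptiness of the LOBM competitive solution space, second constraint: for
`θ > 0`, `ρ_θ = 1 − e^{−θ}`, `λ ∈ (0,1]`, `λ₁ ∈ [λ,1]`, `B > 0`, `0 < w ≤ b ≤ B`,
if `α ≥ (e^{θ(1−b/B)} − 1)/(e^θ − 1)` then the candidate
`z† = λ₁ ρ_θ e^{θ(1−b/B)}/(e^θ − 1)` together with
`δ = (e^{θ(1−b/B)}/(e^θ − 1))(e^{θw/B} − 1 − w/B)` satisfies
`α + (w/(λρ_θ B)) z† + δ ≥ (e^{θ(1−(b−w)/B)} − 1)/(e^θ − 1)`. -/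
theorem lobm_second_constraint_feasible
    (θ lam lam₁ B b w α : ℝ)
    (hθ : 0 < θ) (hlam0 : 0 < lam) (hlam1 : lam ≤ 1)
    (hlam₁l : lam ≤ lam₁) (hlam₁u : lam₁ ≤ 1)
    (hB : 0 < B) (hw0 : 0 < w) (hwb : w ≤ b) (hbB : b ≤ B)
    (hα : (Real.exp (θ * (1 - b / B)) - 1) / (Real.exp θ - 1) ≤ α) :
    let ρ : ℝ := 1 - Real.exp (-θ)
    let z : ℝ := lam₁ * ρ * Real.exp (θ * (1 - b / B)) / (Real.exp θ - 1)
    let δ : ℝ := (Real.exp (θ * (1 - b / B)) / (Real.exp θ - 1)) *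
      (Real.exp (θ * w / B) - 1 - w / B)
    (Real.exp (θ * (1 - (b - w) / B)) - 1) / (Real.exp θ - 1) ≤
      α + (w / (lam * ρ * B)) * z + δ := by
  intro ρ z δ
  set E := Real.exp (θ * (1 - b / B)) with hE
  set X := Real.exp (θ * w / B) with hX
  have he1 : (0:ℝ) < Real.exp θ - 1 := by
    have : (1:ℝ) < Real.exp θ := by
      have := Real.add_one_lt_exp (ne_of_gt hθ)
      linarith
    linarith
  have hρ : 0 < ρ := by
    have : Real.exp (-θ) < 1 := Real.exp_lt_one_iff.mpr (by linarith)
    simp only [ρ]; linarith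
  have hEpos : 0 < E := Real.exp_pos _
  have hXpos : 0 < X := Real.exp_pos _
  have hexp : Real.exp (θ * (1 - (b - w) / B)) = E * X := by
    rw [hE, hX, ← Real.exp_add]
    congr 1
    field_simp
    ring
  -- z-term bound
  have hzq : (w / (lam * ρ * B)) * z - (w / B) * (E / (Real.exp θ - 1))
      = ((lam₁ - lam) / lam) * (w / B) * (E / (Real.exp θ - 1)) := by
    have hzE : z = lam₁ * ρ * E / (Real.exp θ - 1) := rfl
    rw [hzE]
    field_simp
  have hzge : (w / B) * (E / (Real.exp θ - 1)) ≤ (w / (lam * ρ * B)) * z := by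
    have hnn : 0 ≤ ((lam₁ - lam) / lam) * (w / B) * (E / (Real.exp θ - 1)) := by
      apply mul_nonneg
      apply mul_nonneg
      · exact div_nonneg (by linarith) hlam0.le
      · positivity
      · positivity
    linarith [hzq]
  have key : (E * X - 1) / (Real.exp θ - 1)
      = (E - 1) / (Real.exp θ - 1) + (w / B) * (E / (Real.exp θ - 1))
        + (E / (Real.exp θ - 1)) * (X - 1 - w / B) := by
    field_simp
    ring
  have hδ : δ = (E / (Real.exp θ - 1)) * (X - 1 - w / B) := rfl
  rw [hexp, key, hδ]
  linarith
end
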